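/- arXiv:1103.2165 — 2 statements merged into one kernel-verified Lean document; each statement's English description precedes it below -/
import Mathlib

section
/- For a satisfiable CNF formula F, a satisfying assignment α, and a literal l ∈ α, the output-probability satisfies p(F^{[l]}, α) ≥ p(F, α); moreover if l is over a frozen variable then p(F^{[l]}, α) = p(F, α). -/
attribute [local instance] Classical.propDecidable

noncomputable section

structure CNF where
  clauses : Finset (Finset (ℕ × Bool))
  vars : Finset ℕ

def litSat (α : ℕ → Bool) (l : ℕ × Bool) : Prop := α l.1 = l.2

def clauseSat (α : ℕ → Bool) (C : Finset (ℕ × Bool)) : Prop := ∃ l ∈ C, litSat α l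

def Sat (F : CNF) (α : ℕ → Bool) : Prop := ∀ C ∈ F.clauses, clauseSat α C

def CNF.Satisfiable (F : CNF) : Prop := ∃ α, Sat F α

/-- Restrict `F` by the literal `l` (set the variable of `l` so that `l` is true). -/
def restrict (F : CNF) (l : ℕ × Bool) : CNF :=
  ⟨(F.clauses.filter (fun C => l ∉ C)).image (fun C => C.filter (fun m => m ≠ (l.1, !l.2))),
   F.vars.erase l.1⟩

/-- A variable is frozen if all satisfying assignments agree on it. -/
def Frozen (F : CNF) (x : ℕ) : Prop :=
  x ∈ F.vars ∧ ∀ α β, Sat F α → Sat F β → α x = β x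

/-- Satisfying literals: literals over the variables whose restriction stays satisfiable. -/
def SL (F : CNF) : Finset (ℕ × Bool) :=
  (F.vars ×ˢ ({true, false} : Finset Bool)).filter (fun l => (restrict F l).Satisfiable)

/-- Probability that `AssignSatisfiableLiterals` outputs `α` (with fuel). -/
def prAux : ℕ → CNF → (ℕ → Bool) → ℝ
  | 0, _, _ => 1
  | n+1, F, α =>
    if F.vars = ∅ then 1
    else ((SL F).card : ℝ)⁻¹ *
      ∑ l ∈ (SL F).filter (fun l => litSat α l), prAux n (restrict F l) α

def pr (F : CNF) (α : ℕ → Bool) : ℝ := prAux F.vars.card F α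

/-- A literal is `s`-implied if it is implied by at most `s` clauses of `F`. -/
def sImplied (F : CNF) (s : ℕ) (l : ℕ × Bool) : Prop :=
  ∃ G : Finset (Finset (ℕ × Bool)), G ⊆ F.clauses ∧ G.card ≤ s ∧
    ∀ α : ℕ → Bool, (∀ C ∈ G, clauseSat α C) → litSat α l

def ImplicationFree (F : CNF) (s : ℕ) : Prop :=
  ∀ l : ℕ × Bool, l.1 ∈ F.vars → ¬ sImplied F s l

def impliedVars (F : CNF) (s : ℕ) : Finset ℕ :=
  F.vars.filter (fun x => sImplied F s (x, true) ∨ sImplied F s (x, false))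

def impliedVal (F : CNF) (s : ℕ) (x : ℕ) : Bool :=
  if sImplied F s (x, true) then true else false

def closureAux (s : ℕ) : ℕ → CNF → CNF
  | 0, F => F
  | n+1, F =>
    if h : (impliedVars F s).Nonempty then
      closureAux s n (restrict F ((impliedVars F s).min' h, impliedVal F s ((impliedVars F s).min' h)))
    else F

/-- Repeatedly fix all `s`-implied literals. -/
def pclosure (s : ℕ) (F : CNF) : CNF := closureAux s F.vars.card F

/-- `x` is guessed in the run of PPSZ with assignment `β` and permutation `π`. -/
def Guessed (s : ℕ) (β : ℕ → Bool) (x : ℕ) : CNF → List ℕ → Prop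
  | _, [] => False
  | F, y :: π =>
    if x ∉ (pclosure s F).vars then False
    else if y = x then True
    else Guessed s β x
      (if y ∈ (pclosure s F).vars then restrict (pclosure s F) (y, β y) else pclosure s F) π

/-- Probability over a uniformly random permutation of the variables that `x` is guessed. -/
def Pguessed (s : ℕ) (F : CNF) (x : ℕ) (α : ℕ → Bool) : ℝ :=
  ((F.vars.toList.permutations.countP (fun π => decide (Guessed s α x F π))) : ℝ) /
    (Nat.factorial F.vars.card)

/-- The final restricted formula of a PPSZ run. -/
def runPPSZ (s : ℕ) (β : ℕ → Bool) : CNF → List ℕ → CNF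
  | F, [] => pclosure s F
  | F, y :: π =>
    runPPSZ s β
      (if y ∈ (pclosure s F).vars then restrict (pclosure s F) (y, β y) else pclosure s F) π

/-- Success probability of PPSZ over uniform `β` and uniform permutation. -/
def psuccess (s : ℕ) (F : CNF) : ℝ :=
  (∑ b ∈ F.vars.powerset,
    ((F.vars.toList.permutations.countP
      (fun π => decide ((runPPSZ s (fun y => decide (y ∈ b)) F π).clauses = ∅))) : ℝ)) /
  (2 ^ F.vars.card * Nat.factorial F.vars.card)

def asg (b : Finset ℕ) : ℕ → Bool := fun y => decide (y ∈ b)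

/-- The satisfying assignments of `F`, encoded as subsets of the variable set. -/
def satAssignments (F : CNF) : Finset (Finset ℕ) :=
  F.vars.powerset.filter (fun b => Sat F (asg b))

/-- The PPSZ cost of variable `x` in `F`, with guessing bound `S`. -/
def cost (s : ℕ) (S : ℝ) (F : CNF) (x : ℕ) : ℝ :=
  if x ∉ F.vars then 0
  else if Frozen F x then
    ∑ b ∈ satAssignments F, pr F (asg b) * Pguessed s F x (asg b)
  else S

def totalCost (s : ℕ) (S : ℝ) (F : CNF) : ℝ := ∑ x ∈ F.vars, cost s S F x

/-!
Induction on the number of variables. Every literal of a satisfying assignment `α` is a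
satisfying literal, so with `s = |SL F|` the defining recursion reads
`s · p(F, α) = ∑_{y ∈ V(F)} p(F^{[(y, α y)]}, α)`. Restricting by `l = (x, α x)` removes `l` from
the satisfying literals and creates no new ones, so `s' + 1 ≤ s` for `s' = |SL F^{[l]}|`, with
equality when `x` is frozen. By induction and commutation of restrictions,
`p(F^{[y]}, α) ≤ p(F^{[y][l]}, α) = p(F^{[l][y]}, α)`, whence
`s · p(F, α) ≤ p(F^{[l]}, α) + s' · p(F^{[l]}, α) ≤ s · p(F^{[l]}, α)`.
-/

@[simp]
lemma restrict_vars (F : CNF) (l : ℕ × Bool) : (restrict F l).vars = F.vars.erase l.1 := rfl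

lemma Sat.restrict_of_litSat {F : CNF} {β : ℕ → Bool} {l : ℕ × Bool} (h : Sat F β)
    (hl : litSat β l) : Sat (restrict F l) β := by
  intro C hC
  simp only [restrict, Finset.mem_image, Finset.mem_filter] at hC
  obtain ⟨D, ⟨hD, -⟩, rfl⟩ := hC
  obtain ⟨m, hm, hmsat⟩ := h D hD
  refine ⟨m, Finset.mem_filter.2 ⟨hm, ?_⟩, hmsat⟩
  rintro rfl
  exact Bool.not_ne_self _ (hmsat.symm.trans hl)

lemma Sat.of_restrict {F : CNF} {β : ℕ → Bool} {l : ℕ × Bool} (h : Sat (restrict F l) β) :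
    Sat F (Function.update β l.1 l.2) := by
  intro C hC
  by_cases hlC : l ∈ C
  · exact ⟨l, hlC, by simp [litSat]⟩
  obtain ⟨m, hm, hms⟩ := h (C.filter (fun m => m ≠ (l.1, !l.2)))
    (Finset.mem_image.2 ⟨C, Finset.mem_filter.2 ⟨hC, hlC⟩, rfl⟩)
  obtain ⟨hmC, hmne⟩ := Finset.mem_filter.1 hm
  refine ⟨m, hmC, ?_⟩
  obtain ⟨y, b⟩ := m
  obtain ⟨x, c⟩ := l
  by_cases hyx : y = x
  · subst hyx
    cases b <;> cases c <;> simp_all [litSat]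
  · simpa [litSat, Function.update_of_ne hyx] using hms

lemma CNF.Satisfiable.of_restrict {F : CNF} {l : ℕ × Bool} (h : (restrict F l).Satisfiable) :
    F.Satisfiable :=
  let ⟨_, hβ⟩ := h; ⟨_, hβ.of_restrict⟩

lemma restrict_restrict_clauses (F : CNF) {l m : ℕ × Bool} (h : l.1 ≠ m.1) :
    (restrict (restrict F l) m).clauses =
      (F.clauses.filter (fun C => l ∉ C ∧ m ∉ C)).image
        (fun C => C.filter (fun a => a ≠ (l.1, !l.2) ∧ a ≠ (m.1, !m.2))) := by
  ext D
  simp only [restrict, Finset.mem_image, Finset.mem_filter]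
  constructor
  · rintro ⟨_, ⟨⟨C, ⟨hC, hlC⟩, rfl⟩, hmC'⟩, rfl⟩
    refine ⟨C, ⟨hC, hlC, fun hmC => hmC' (Finset.mem_filter.2 ⟨hmC, ?_⟩)⟩,
      (Finset.filter_filter ..).symm⟩
    intro he
    exact h (by rw [he])
  · rintro ⟨C, ⟨hC, hlC, hmC⟩, rfl⟩
    exact ⟨_, ⟨⟨C, ⟨hC, hlC⟩, rfl⟩, fun hm' => hmC (Finset.mem_filter.1 hm').1⟩,
      Finset.filter_filter ..⟩

attribute [ext] CNF

lemma restrict_comm (F : CNF) {l m : ℕ × Bool} (h : l.1 ≠ m.1) :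
    restrict (restrict F l) m = restrict (restrict F m) l := by
  ext1
  · rw [restrict_restrict_clauses F h, restrict_restrict_clauses F h.symm]
    congr 1 <;> simp only [and_comm]
  · simp only [restrict_vars, Finset.erase_right_comm]

lemma mem_SL {F : CNF} {m : ℕ × Bool} :
    m ∈ SL F ↔ m.1 ∈ F.vars ∧ (restrict F m).Satisfiable := by
  obtain ⟨y, b⟩ := m
  cases b <;> simp [SL]

lemma filter_litSat_SL {F : CNF} {α : ℕ → Bool} (hα : Sat F α) :
    (SL F).filter (litSat α) = F.vars.image (fun y => (y, α y)) := by
  ext ⟨y, b⟩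
  simp only [Finset.mem_filter, mem_SL, Finset.mem_image, Prod.mk.injEq, litSat]
  constructor
  · rintro ⟨⟨hy, -⟩, rfl⟩
    exact ⟨y, hy, rfl, rfl⟩
  · rintro ⟨y, hy, rfl, rfl⟩
    exact ⟨⟨hy, α, hα.restrict_of_litSat rfl⟩, rfl⟩

lemma SL_restrict_subset (F : CNF) (l : ℕ × Bool) : SL (restrict F l) ⊆ SL F := by
  intro m hm
  obtain ⟨hm₁, hsat⟩ := mem_SL.1 hm
  obtain ⟨hml, hm₁⟩ := Finset.mem_erase.1 hm₁
  rw [restrict_comm F (Ne.symm hml)] at hsat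
  exact mem_SL.2 ⟨hm₁, hsat.of_restrict⟩

lemma notMem_SL_restrict (F : CNF) (l : ℕ × Bool) : l ∉ SL (restrict F l) := fun h =>
  Finset.notMem_erase _ _ (mem_SL.1 h).1

lemma card_SL_restrict_lt {F : CNF} {l : ℕ × Bool} (hl : l ∈ SL F) :
    (SL (restrict F l)).card < (SL F).card :=
  Finset.card_lt_card <| Finset.ssubset_iff_of_subset (SL_restrict_subset F l) |>.2
    ⟨l, hl, notMem_SL_restrict F l⟩

lemma Frozen.restrict_of_ne {F : CNF} {x y : ℕ} (hx : Frozen F x) (hxy : y ≠ x) (b : Bool) :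
    Frozen (restrict F (y, b)) x := by
  refine ⟨Finset.mem_erase.2 ⟨hxy.symm, hx.1⟩, fun γ δ hγ hδ => ?_⟩
  simpa [Function.update_of_ne hxy.symm] using hx.2 _ _ hγ.of_restrict hδ.of_restrict

lemma SL_eq_insert_of_frozen {F : CNF} {α : ℕ → Bool} {x : ℕ} (hα : Sat F α)
    (hx : Frozen F x) : SL F = insert (x, α x) (SL (restrict F (x, α x))) := by
  refine subset_antisymm (fun m hm => ?_) <| Finset.insert_subset
    (mem_SL.2 ⟨hx.1, α, hα.restrict_of_litSat rfl⟩) (SL_restrict_subset F _)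
  obtain ⟨hm₁, β, hβ⟩ := mem_SL.1 hm
  have hγ : Sat F (Function.update β m.1 m.2) := hβ.of_restrict
  have hγx : Function.update β m.1 m.2 x = α x := hx.2 _ _ hγ hα
  obtain ⟨y, b⟩ := m
  by_cases hyx : y = x
  · subst hyx
    simp only [Function.update_self] at hγx
    simp [hγx]
  · refine Finset.mem_insert_of_mem <|
      mem_SL.2 ⟨Finset.mem_erase.2 ⟨hyx, hm₁⟩, Function.update β y b, ?_⟩
    exact (hγ.restrict_of_litSat (l := (x, α x)) hγx).restrict_of_litSat (Function.update_self ..)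

lemma pr_of_vars_nonempty {F : CNF} (α : ℕ → Bool) (h : F.vars.Nonempty) :
    pr F α = ((SL F).card : ℝ)⁻¹ * ∑ l ∈ (SL F).filter (litSat α), pr (restrict F l) α := by
  obtain ⟨k, hk⟩ := Nat.exists_eq_add_one_of_ne_zero (Finset.card_pos.2 h).ne'
  rw [pr, hk, prAux, if_neg h.ne_empty]
  congr 1
  refine Finset.sum_congr rfl fun l hl => ?_
  have hl₁ : l.1 ∈ F.vars := (mem_SL.1 (Finset.mem_filter.1 hl).1).1
  rw [pr, restrict_vars, Finset.card_erase_of_mem hl₁, hk, Nat.add_sub_cancel]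

lemma pr_nonneg (F : CNF) (α : ℕ → Bool) : 0 ≤ pr F α := by
  suffices ∀ n F, 0 ≤ prAux n F α from this _ F
  intro n
  induction n with
  | zero => simp [prAux]
  | succ n ih =>
    intro F
    rw [prAux]
    split_ifs
    · exact zero_le_one
    · exact mul_nonneg (by positivity) (Finset.sum_nonneg fun l _ => ih _)

lemma card_SL_mul_pr {F : CNF} {α : ℕ → Bool} (hα : Sat F α) :
    ((SL F).card : ℝ) * pr F α = ∑ y ∈ F.vars, pr (restrict F (y, α y)) α := by
  have hsum : ∑ l ∈ (SL F).filter (litSat α), pr (restrict F l) α =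
      ∑ y ∈ F.vars, pr (restrict F (y, α y)) α := by
    rw [filter_litSat_SL hα, Finset.sum_image fun _ _ _ _ h => congrArg Prod.fst h]
  rcases F.vars.eq_empty_or_nonempty with hF | hF
  · have hSL : SL F = ∅ := Finset.eq_empty_of_forall_notMem fun m hm => by
      simpa [hF] using (mem_SL.1 hm).1
    simp [hSL, hF]
  · obtain ⟨y, hy⟩ := hF
    have hcard : ((SL F).card : ℝ) ≠ 0 := Nat.cast_ne_zero.2 <| Finset.card_ne_zero_of_mem
      ((mem_SL (m := (y, α y))).2 ⟨hy, α, hα.restrict_of_litSat rfl⟩)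
    rw [pr_of_vars_nonempty α ⟨y, hy⟩, ← mul_assoc, mul_inv_cancel₀ hcard, one_mul, hsum]

lemma pr_le_pr_restrict_and_eq_of_frozen (α : ℕ → Bool) :
    ∀ (n : ℕ) (F : CNF) (x : ℕ), F.vars.card = n → Sat F α → x ∈ F.vars →
      pr F α ≤ pr (restrict F (x, α x)) α ∧
        (Frozen F x → pr (restrict F (x, α x)) α = pr F α) := by
  intro n
  induction n with
  | zero => exact fun F x hn _ hx => absurd hn (Finset.card_ne_zero_of_mem hx)
  | succ n ih =>
  intro F x hn hα hx
  set F' := restrict F (x, α x)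
  have hα' : Sat F' α := hα.restrict_of_litSat rfl
  have hl : (x, α x) ∈ SL F := mem_SL.2 ⟨hx, α, hα'⟩
  have hIH : ∀ y ∈ F.vars.erase x, pr (restrict F (y, α y)) α ≤ pr (restrict F' (y, α y)) α ∧
      (Frozen F x → pr (restrict F (y, α y)) α = pr (restrict F' (y, α y)) α) := by
    intro y hy
    obtain ⟨hyx, hy⟩ := Finset.mem_erase.1 hy
    have hcard : (restrict F (y, α y)).vars.card = n := by
      simp [Finset.card_erase_of_mem hy, hn]
    obtain ⟨hle, heq⟩ :=
      ih _ x hcard (hα.restrict_of_litSat rfl) (Finset.mem_erase.2 ⟨Ne.symm hyx, hx⟩)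
    rw [restrict_comm F (l := (y, α y)) hyx] at hle heq
    exact ⟨hle, fun hfr => (heq (hfr.restrict_of_ne hyx _)).symm⟩
  have hF : ((SL F).card : ℝ) * pr F α =
      pr F' α + ∑ y ∈ F.vars.erase x, pr (restrict F (y, α y)) α := by
    rw [card_SL_mul_pr hα, ← Finset.add_sum_erase _ _ hx]
  have hF' : ((SL F').card : ℝ) * pr F' α = ∑ y ∈ F.vars.erase x, pr (restrict F' (y, α y)) α :=
    card_SL_mul_pr hα'
  have hpos : (0 : ℝ) < (SL F).card := Nat.cast_pos.2 (Finset.card_pos.2 ⟨_, hl⟩)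
  constructor
  · have hlt : ((SL F').card : ℝ) + 1 ≤ (SL F).card := by exact_mod_cast card_SL_restrict_lt hl
    have hsum := Finset.sum_le_sum fun y hy => (hIH y hy).1
    refine le_of_mul_le_mul_left ?_ hpos
    nlinarith [pr_nonneg F' α]
  · intro hfr
    have hcard : ((SL F).card : ℝ) = (SL F').card + 1 := by
      rw [SL_eq_insert_of_frozen hα hfr, Finset.card_insert_of_notMem (notMem_SL_restrict F _)]
      push_cast
      rfl
    have hsum := Finset.sum_congr rfl fun y hy => (hIH y hy).2 hfr
    refine mul_left_cancel₀ hpos.ne' ?_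
    rw [hF, hsum, ← hF', hcard]
    ring

theorem pr_restrict_ge_general (F : CNF) (α : ℕ → Bool) (x : ℕ)
    (hα : Sat F α) (hx : x ∈ F.vars) :
    pr F α ≤ pr (restrict F (x, α x)) α ∧
      (Frozen F x → pr (restrict F (x, α x)) α = pr F α) :=
  pr_le_pr_restrict_and_eq_of_frozen α _ F x rfl hα hx

/-- For `l ∈ α`, `p(F^{[l]}, α) ≥ p(F, α)`, with equality for frozen variables. -/
theorem pr_restrict_ge (F : CNF) (α : ℕ → Bool) (x : ℕ) (hF : F.Satisfiable)
    (hα : Sat F α) (hx : x ∈ F.vars) :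
    pr F α ≤ pr (restrict F (x, α x)) α ∧
      (Frozen F x → pr (restrict F (x, α x)) α = pr F α) :=
  pr_restrict_ge_general F α x hα hx

end
end

section
/- Key exponent inequality: let n ≥ 1, n_N, n_C ≥ 0 be integers with n = n_N + n_C, let M = 2n_N + n_C, and let S ∈ [2 ln 2 − 1, 1]. Then log₂(M/(2n)) + n_N·(2S/M) + n_C·(1/M) ≥ 0. -/
/-!
Put `a = n_N`, `c = n_C`, `M = 2a + c`. Then `log₂ (M / (2n)) = log₂ (M / n) - 1` and
`ln (M / n) ≥ 1 - n / M = a / M`, while the two remaining terms equal `1 - (2 - 2S) · a / M`.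
So the left side is at least `(a / M) · (1 / ln 2 - (2 - 2S))`, and
`2 - 2S ≤ 4 - 4 ln 2 ≤ 1 / ln 2` since `(2 ln 2 - 1)² ≥ 0`.
-/

open Real

lemma two_sub_two_mul_le_inv_log_two {S : ℝ} (hS : 2 * log 2 - 1 ≤ S) :
    2 - 2 * S ≤ (log 2)⁻¹ := by
  have hlog : 0 < log 2 := log_pos one_lt_two
  have h : 4 - 4 * log 2 ≤ (log 2)⁻¹ := by
    rw [← one_div, le_div_iff₀ hlog]
    nlinarith [sq_nonneg (2 * log 2 - 1)]
  linarith

lemma div_le_log_div {m n : ℝ} (hm : 0 < m) (hn : 0 < n) : (m - n) / m ≤ log (m / n) := by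
  have := one_sub_inv_le_log_of_pos (div_pos hm hn)
  rwa [inv_div, one_sub_div hm.ne'] at this

lemma exponent_inequality_real {a c S : ℝ} (ha : 0 ≤ a) (hac : 0 < a + c)
    (hS : 2 * log 2 - 1 ≤ S) :
    0 ≤ logb 2 ((2 * a + c) / (2 * (a + c))) + a * (2 * S / (2 * a + c))
      + c * (1 / (2 * a + c)) := by
  have hM : 0 < 2 * a + c := by linarith
  have hhalve : logb 2 ((2 * a + c) / (2 * (a + c))) = logb 2 ((2 * a + c) / (a + c)) - 1 := by
    rw [mul_comm 2 (a + c), ← div_div, logb_div (div_pos hM hac).ne' two_ne_zero,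
      logb_self_eq_one one_lt_two]
  have hrest : a * (2 * S / (2 * a + c)) + c * (1 / (2 * a + c))
      = 1 - (2 - 2 * S) * (a / (2 * a + c)) := by
    field_simp
    rw [eq_sub_iff_add_eq, ← add_div, div_eq_one_iff_eq (by linarith)]
    ring
  have hgain : (log 2)⁻¹ * (a / (2 * a + c)) ≤ logb 2 ((2 * a + c) / (a + c)) := by
    have hlog := div_le_log_div hM hac
    rw [show 2 * a + c - (a + c) = a by ring] at hlog
    rw [← log_div_log, inv_mul_eq_div]
    exact div_le_div_of_nonneg_right hlog (log_pos one_lt_two).le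
  have hcoef := mul_le_mul_of_nonneg_right (two_sub_two_mul_le_inv_log_two hS)
    (div_nonneg ha hM.le)
  rw [add_assoc, hhalve, hrest]
  linarith

theorem exponent_inequality_general (n nN nC : ℕ) (S : ℝ) (hn : 1 ≤ n) (hsum : n = nN + nC)
    (hS0 : 2 * Real.log 2 - 1 ≤ S) :
    Real.logb 2 (((2 * nN + nC : ℕ) : ℝ) / (2 * (n : ℝ)))
      + (nN : ℝ) * (2 * S / ((2 * nN + nC : ℕ) : ℝ))
      + (nC : ℝ) * (1 / ((2 * nN + nC : ℕ) : ℝ)) ≥ 0 := by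
  subst hsum
  have hpos : (0 : ℝ) < nN + nC := by exact_mod_cast hn
  push_cast
  exact exponent_inequality_real (Nat.cast_nonneg nN) hpos hS0

/-- Key exponent inequality: for `n = n_N + n_C ≥ 1`, `M = 2n_N + n_C` and
`S ∈ [2 ln 2 - 1, 1]`, `log₂(M/(2n)) + n_N·(2S/M) + n_C·(1/M) ≥ 0`. -/
theorem exponent_inequality (n nN nC : ℕ) (S : ℝ) (hn : 1 ≤ n) (hsum : n = nN + nC)
    (hS0 : 2 * Real.log 2 - 1 ≤ S) (hS1 : S ≤ 1) :
    Real.logb 2 (((2 * nN + nC : ℕ) : ℝ) / (2 * (n : ℝ)))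
      + (nN : ℝ) * (2 * S / ((2 * nN + nC : ℕ) : ℝ))
      + (nC : ℝ) * (1 / ((2 * nN + nC : ℕ) : ℝ)) ≥ 0 :=
  exponent_inequality_general n nN nC S hn hsum hS0
end
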